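/- arXiv:2601.05442 — 6 statements merged into one kernel-verified Lean document; each statement's English description precedes it below -/
import Mathlib

section
/- Let f : [n] → {1,2,3} be given by f(x) = 1 if x ≡ 1 (mod 3), f(x) = 2 if x ≡ 2 (mod 3), f(x) = 3 if x ≡ 0 (mod 3). Then the number of rainbow triples (x, y, z) ∈ [n]³ with x + y = 2z is n²/3 + O(n); in particular there exists a constant C such that this count is at least n²/3 - Cn for all n. -/
/-!
The endpoints `x, y` of a rainbow progression have equal parity and distinct residues mod 3;
conversely, for such endpoints the midpoint `z ≡ -(x + y) [MOD 3]` automatically gets the third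
colour, since `0 + 1 + 2 ≡ 0 [MOD 3]`. For fixed `x` the admissible `y` are those congruent to `x`
mod 2 but not mod 6, which number `n / 2 - n / 6 + O(1) = n / 3 + O(1)`; summing over `x` gives
`n ^ 2 / 3 + O(n)`.
-/

def col3 (x : ℕ) : ℕ := if x % 3 = 1 then 1 else if x % 3 = 2 then 2 else 3

open Finset

lemma col3_ne_col3_iff {x y : ℕ} : col3 x ≠ col3 y ↔ x % 3 ≠ y % 3 := by
  unfold col3
  split_ifs <;> omega

def rainbowAPs (n : ℕ) : Finset (ℕ × ℕ × ℕ) :=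
  (Icc 1 n ×ˢ Icc 1 n ×ˢ Icc 1 n).filter
    (fun t => t.1 + t.2.1 = 2 * t.2.2 ∧ col3 t.1 ≠ col3 t.2.1 ∧
      col3 t.1 ≠ col3 t.2.2 ∧ col3 t.2.1 ≠ col3 t.2.2)

/-- Shifted down by one: `y + 1` runs over the second endpoints of the rainbow progressions in
`[n]` whose first endpoint is `x + 1`. -/
def rainbowPartners (n x : ℕ) : Finset ℕ :=
  {y ∈ range n | y ≡ x [MOD 2] ∧ ¬ y ≡ x [MOD 3]}

lemma card_rainbowAPs (n : ℕ) :
    #(rainbowAPs n) = ∑ x ∈ range n, #(rainbowPartners n x) := by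
  rw [← card_sigma]
  refine card_nbij' (fun t => ⟨t.1 - 1, t.2.1 - 1⟩)
    (fun p => (p.1 + 1, p.2 + 1, (p.1 + p.2) / 2 + 1)) ?_ ?_ ?_ ?_
  · rintro ⟨x, y, z⟩ ht
    simp only [rainbowAPs, mem_coe, mem_filter, mem_product, mem_Icc, col3_ne_col3_iff] at ht
    simp only [rainbowPartners, mem_coe, mem_sigma, mem_filter, mem_range, Nat.ModEq.eq_1]
    omega
  · rintro ⟨x, y⟩ hp
    simp only [rainbowPartners, mem_coe, mem_sigma, mem_filter, mem_range, Nat.ModEq.eq_1] at hp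
    simp only [rainbowAPs, mem_coe, mem_filter, mem_product, mem_Icc, col3_ne_col3_iff]
    omega
  · rintro ⟨x, y, z⟩ ht
    simp only [rainbowAPs, mem_coe, mem_filter, mem_product, mem_Icc] at ht
    simp only [Prod.mk.injEq]
    omega
  · rintro ⟨x, y⟩ -
    simp

lemma card_range_filter_modEq_bounds {m : ℕ} (hm : 0 < m) (n v : ℕ) :
    n < m * #{y ∈ range n | y ≡ v [MOD m]} + m ∧
      m * #{y ∈ range n | y ≡ v [MOD m]} ≤ n + m := by
  rw [← Nat.count_eq_card_filter_range, Nat.count_modEq_card n hm]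
  have := Nat.div_add_mod n m
  have := Nat.mod_lt n hm
  split_ifs <;> simp only [mul_add, mul_one, add_zero] <;> omega

lemma card_modEq_two_eq_card_rainbowPartners_add (n x : ℕ) :
    #{y ∈ range n | y ≡ x [MOD 2]} =
      #(rainbowPartners n x) + #{y ∈ range n | y ≡ x [MOD 6]} := by
  rw [← card_filter_add_card_filter_not (s := {y ∈ range n | y ≡ x [MOD 2]})
    (fun y => ¬ y ≡ x [MOD 6]), filter_filter, filter_filter, rainbowPartners]
  unfold Nat.ModEq
  congr 2 <;> exact filter_congr fun y _ => by omega

lemma abs_three_mul_card_rainbowPartners_sub_le (n x : ℕ) :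
    |3 * (#(rainbowPartners n x) : ℤ) - n| ≤ 6 := by
  have hsplit := card_modEq_two_eq_card_rainbowPartners_add n x
  have h2 := card_range_filter_modEq_bounds (by norm_num : 0 < 2) n x
  have h6 := card_range_filter_modEq_bounds (by norm_num : 0 < 6) n x
  exact abs_le.mpr ⟨by omega, by omega⟩

lemma abs_three_mul_card_rainbowAPs_sub_le (n : ℕ) :
    |3 * (#(rainbowAPs n) : ℤ) - n ^ 2| ≤ 6 * (n : ℤ) := by
  rw [card_rainbowAPs]
  push_cast
  calc |3 * ∑ x ∈ range n, (#(rainbowPartners n x) : ℤ) - n ^ 2|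
      = |∑ x ∈ range n, (3 * (#(rainbowPartners n x) : ℤ) - n)| := by
        rw [sum_sub_distrib, ← mul_sum, sum_const, card_range, nsmul_eq_mul, sq]
    _ ≤ ∑ x ∈ range n, |3 * (#(rainbowPartners n x) : ℤ) - n| := abs_sum_le_sum_abs _ _
    _ ≤ ∑ _x ∈ range n, 6 :=
        sum_le_sum fun x _ => abs_three_mul_card_rainbowPartners_sub_le n x
    _ = 6 * n := by rw [sum_const, card_range, nsmul_eq_mul, mul_comm]

theorem stmt8 : ∃ C : ℝ, ∀ n : ℕ,
    |((((Finset.Icc 1 n ×ˢ Finset.Icc 1 n ×ˢ Finset.Icc 1 n).filter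
        (fun t => t.1 + t.2.1 = 2 * t.2.2 ∧ col3 t.1 ≠ col3 t.2.1 ∧
          col3 t.1 ≠ col3 t.2.2 ∧ col3 t.2.1 ≠ col3 t.2.2)).card : ℝ) -
      (n : ℝ) ^ 2 / 3)| ≤ C * n := by
  refine ⟨2, fun n => ?_⟩
  change |(#(rainbowAPs n) : ℝ) - (n : ℝ) ^ 2 / 3| ≤ (2 : ℝ) * n
  have h : |3 * (#(rainbowAPs n) : ℝ) - n ^ 2| ≤ 6 * (n : ℝ) := by
    exact_mod_cast abs_three_mul_card_rainbowAPs_sub_le n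
  have hthird : (#(rainbowAPs n) : ℝ) - n ^ 2 / 3 = (3 * #(rainbowAPs n) - n ^ 2) / 3 := by ring
  rw [hthird, abs_div, abs_of_pos (three_pos : (0 : ℝ) < 3), div_le_iff₀ three_pos]
  linarith
end

section
/- For every ε > 0, for all sufficiently large n there is a 3-coloring f of [n] such that the proportion of rainbow triples among all triples (x, y, z) ∈ [n]³ with x + y = 2z is at least 2/3 − ε. -/
/-!
Colour `x` by `x mod 3`. A solution of `x + y = 2z` makes `x, z, y` an arithmetic progression mod 3,
so its colours are either pairwise distinct or all equal, the latter exactly when `x ≡ y (mod 3)`;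
together with `x ≡ y (mod 2)` this means `x ≡ y (mod 6)`. About `n² / 2` pairs `(x, y)` in `[n]²` have equal parity and each determines a
solution, while only about `n² / 6` are congruent mod 6, so asymptotically at most a third of the
solutions are not rainbow.
-/

open Finset

def threeAPs (n : ℕ) : Finset (ℕ × ℕ × ℕ) :=
  (Icc 1 n ×ˢ Icc 1 n ×ˢ Icc 1 n).filter fun t => t.1 + t.2.1 = 2 * t.2.2

def IsRainbow {α : Type*} (f : ℕ → α) (t : ℕ × ℕ × ℕ) : Prop :=
  f t.1 ≠ f t.2.1 ∧ f t.1 ≠ f t.2.2 ∧ f t.2.1 ≠ f t.2.2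

instance {α : Type*} [DecidableEq α] (f : ℕ → α) : DecidablePred (IsRainbow f) :=
  fun t => inferInstanceAs (Decidable (f t.1 ≠ f t.2.1 ∧ f t.1 ≠ f t.2.2 ∧ f t.2.1 ≠ f t.2.2))

def mod3Coloring (x : ℕ) : Fin 3 := ⟨x % 3, Nat.mod_lt x three_pos⟩

lemma filter_isRainbow_threeAPs {α : Type*} [DecidableEq α] (f : ℕ → α) (n : ℕ) :
    (threeAPs n).filter (IsRainbow f) = (Icc 1 n ×ˢ Icc 1 n ×ˢ Icc 1 n).filter fun t =>
      t.1 + t.2.1 = 2 * t.2.2 ∧ f t.1 ≠ f t.2.1 ∧ f t.1 ≠ f t.2.2 ∧ f t.2.1 ≠ f t.2.2 := by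
  rw [threeAPs, filter_filter]
  rfl

lemma mem_threeAPs {n : ℕ} {t : ℕ × ℕ × ℕ} :
    t ∈ threeAPs n ↔ (1 ≤ t.1 ∧ t.1 ≤ n) ∧ (1 ≤ t.2.1 ∧ t.2.1 ≤ n) ∧ (1 ≤ t.2.2 ∧ t.2.2 ≤ n) ∧
      t.1 + t.2.1 = 2 * t.2.2 := by
  simp only [threeAPs, mem_filter, mem_product, mem_Icc, and_assoc]

/-- `(a, b) ↦ (2a - b mod 2, b, a + ⌊b / 2⌋)` injects `[n/2] × [n]` into the solutions. -/
lemma div_two_mul_le_card_threeAPs (n : ℕ) : n / 2 * n ≤ #(threeAPs n) := by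
  have h := card_le_card_of_injOn (s := Icc 1 (n / 2) ×ˢ Icc 1 n) (t := threeAPs n)
    (fun p : ℕ × ℕ => (2 * p.1 - p.2 % 2, p.2, p.1 + p.2 / 2))
    (by
      intro p hp
      simp only [coe_product, Set.mem_prod, mem_coe, mem_Icc] at hp
      simp only [mem_coe, mem_threeAPs]
      omega)
    (by
      rintro ⟨a, b⟩ hp ⟨c, d⟩ hq h
      simp only [coe_product, Set.mem_prod, mem_coe, mem_Icc] at hp hq
      simp only [Prod.mk.injEq] at h ⊢
      omega)
  simpa using h

lemma mod_six_eq_of_not_isRainbow_mod3Coloring {t : ℕ × ℕ × ℕ} (ht : t.1 + t.2.1 = 2 * t.2.2)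
    (hbad : ¬ IsRainbow mod3Coloring t) : t.1 % 6 = t.2.1 % 6 := by
  simp only [IsRainbow, mod3Coloring, ne_eq, Fin.mk.injEq, not_and_or, not_not] at hbad
  omega

/-- A non-rainbow solution is determined by `x` and `⌊y / 6⌋`. -/
lemma card_filter_not_isRainbow_mod3Coloring_le (n : ℕ) :
    #((threeAPs n).filter fun t => ¬ IsRainbow mod3Coloring t) ≤ n * (n / 6 + 1) := by
  have key : ∀ t ∈ (threeAPs n).filter (fun t => ¬ IsRainbow mod3Coloring t),
      (1 ≤ t.1 ∧ t.1 ≤ n) ∧ t.2.1 ≤ n ∧ t.1 + t.2.1 = 2 * t.2.2 ∧ t.1 % 6 = t.2.1 % 6 := by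
    intro t ht
    rw [mem_filter, mem_threeAPs] at ht
    obtain ⟨⟨hx, ⟨-, hy⟩, -, hsol⟩, hbad⟩ := ht
    exact ⟨hx, hy, hsol, mod_six_eq_of_not_isRainbow_mod3Coloring hsol hbad⟩
  have h := card_le_card_of_injOn (t := Icc 1 n ×ˢ range (n / 6 + 1))
    (fun t : ℕ × ℕ × ℕ => (t.1, t.2.1 / 6))
    (by
      intro t ht
      obtain ⟨hx, hy, -, -⟩ := key t ht
      simp only [mem_coe, mem_product, mem_Icc, mem_range]
      exact ⟨hx, by omega⟩)
    (by
      rintro ⟨x, y, z⟩ ht ⟨x', y', z'⟩ hu h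
      obtain ⟨-, -, hs, hm⟩ := key _ ht
      obtain ⟨-, -, hs', hm'⟩ := key _ hu
      simp only [Prod.mk.injEq] at h ⊢ hs hs' hm hm'
      omega)
  simpa using h

lemma le_card_filter_isRainbow_mod3Coloring {ε : ℝ} {n : ℕ} (hε : 0 ≤ ε)
    (hn : 3 ≤ ε * ((n : ℝ) - 1)) :
    (2 / 3 - ε) * #(threeAPs n) ≤ #((threeAPs n).filter (IsRainbow mod3Coloring)) := by
  have hS : (n : ℝ) * (n - 1) ≤ 2 * #(threeAPs n) := by
    have h := div_two_mul_le_card_threeAPs n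
    have hhalf : (n : ℝ) - 1 ≤ 2 * (n / 2 : ℕ) := by
      have : n ≤ 2 * (n / 2) + 1 := by omega
      linarith [show (n : ℝ) ≤ 2 * (n / 2 : ℕ) + 1 by exact_mod_cast this]
    have : ((n / 2 : ℕ) : ℝ) * n ≤ #(threeAPs n) := by exact_mod_cast h
    nlinarith [(n.cast_nonneg : (0 : ℝ) ≤ n)]
  have hM : 6 * (#((threeAPs n).filter fun t => ¬ IsRainbow mod3Coloring t) : ℝ) ≤
      n * n + 6 * n := by
    have h := card_filter_not_isRainbow_mod3Coloring_le n
    have hsixth : 6 * ((n / 6 : ℕ) : ℝ) ≤ n := by exact_mod_cast Nat.mul_div_le n 6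
    have : (#((threeAPs n).filter fun t => ¬ IsRainbow mod3Coloring t) : ℝ) ≤
        n * ((n / 6 : ℕ) + 1) := by exact_mod_cast h
    nlinarith [(n.cast_nonneg : (0 : ℝ) ≤ n)]
  have hsplit : (#((threeAPs n).filter (IsRainbow mod3Coloring)) : ℝ) +
      #((threeAPs n).filter fun t => ¬ IsRainbow mod3Coloring t) = #(threeAPs n) := by
    exact_mod_cast card_filter_add_card_filter_not (IsRainbow mod3Coloring)
  nlinarith [mul_le_mul_of_nonneg_left hS hε, mul_le_mul_of_nonneg_right hn n.cast_nonneg]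

lemma exists_mod3Coloring_eq {n : ℕ} (hn : 3 ≤ n) (c : Fin 3) :
    ∃ x ∈ Icc 1 n, mod3Coloring x = c := by
  fin_cases c
  · exact ⟨3, mem_Icc.2 ⟨by omega, hn⟩, rfl⟩
  · exact ⟨1, mem_Icc.2 ⟨le_rfl, by omega⟩, rfl⟩
  · exact ⟨2, mem_Icc.2 ⟨by omega, by omega⟩, rfl⟩

theorem stmt9 (ε : ℝ) (hε : 0 < ε) : ∃ N : ℕ, ∀ n : ℕ, N ≤ n →
    ∃ f : ℕ → Fin 3, (∀ c : Fin 3, ∃ x ∈ Finset.Icc 1 n, f x = c) ∧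
      (2 / 3 - ε) *
        ((((Finset.Icc 1 n ×ˢ Finset.Icc 1 n ×ˢ Finset.Icc 1 n).filter
          (fun t => t.1 + t.2.1 = 2 * t.2.2)).card : ℝ)) ≤
      ((((Finset.Icc 1 n ×ˢ Finset.Icc 1 n ×ˢ Finset.Icc 1 n).filter
          (fun t => t.1 + t.2.1 = 2 * t.2.2 ∧ f t.1 ≠ f t.2.1 ∧
            f t.1 ≠ f t.2.2 ∧ f t.2.1 ≠ f t.2.2)).card : ℝ)) := by
  refine ⟨⌈3 / ε⌉₊ + 3, fun n hn => ⟨mod3Coloring, exists_mod3Coloring_eq (by omega), ?_⟩⟩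
  have hεn : 3 ≤ ε * ((n : ℝ) - 1) := by
    have hceil : 3 / ε ≤ (n : ℝ) - 1 := by
      have : ((⌈3 / ε⌉₊ + 3 : ℕ) : ℝ) ≤ n := by exact_mod_cast hn
      push_cast at this
      linarith [Nat.le_ceil (3 / ε)]
    calc (3 : ℝ) = ε * (3 / ε) := by field_simp
      _ ≤ ε * ((n : ℝ) - 1) := by gcongr
  rw [← filter_isRainbow_threeAPs]
  exact le_card_filter_isRainbow_mod3Coloring hε.le hεn
end

section
/- Suppose 3 divides n. Define f : ℤ/nℤ → {1,2,3} by f(x) = 1 if the canonical representative of x in {0,...,n−1} is ≡ 0 (mod 3), f(x) = 2 if ≡ 1 (mod 3), f(x) = 3 if ≡ 2 (mod 3). Then exactly (2/3)·n² of the n² triples (x, y, z) ∈ (ℤ/nℤ)³ with x + y = 2z are rainbow. -/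
/-!
The colour of `x` is its residue `π x ∈ ZMod 3`. A solution of `x + y = 2 * z` is determined by
`(x, z)`, and in `ZMod 3` the residues `π x`, `π z`, `2 * π z - π x` are pairwise distinct as soon
as `π x ≠ π z`. So the rainbow solutions correspond to the pairs `(x, z)` lying in different
residue classes; each class has `n / 3` elements, which leaves `n² - n · n / 3 = 2n² / 3` pairs.
-/

open Function

section PairCount

variable {G H : Type*} [AddGroup G] [AddGroup H]

lemma AddMonoidHom.card_pairs_map_eq (φ : G →+ H) :
    Nat.card {p : G × G // φ p.1 = φ p.2} = Nat.card G * Nat.card φ.ker := by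
  rw [← Nat.card_prod]
  exact Nat.card_congr
    { toFun := fun p => (p.1.2, ⟨p.1.1 - p.1.2, by simp [p.2]⟩)
      invFun := fun q => ⟨(q.2 + q.1, q.1), by simp [φ.mem_ker.mp q.2.2]⟩
      left_inv := fun p => by ext <;> simp
      right_inv := fun q => by ext <;> simp }

lemma AddMonoidHom.card_ker_mul_card_of_surjective [Finite G] (φ : G →+ H)
    (hφ : Surjective φ) : Nat.card φ.ker * Nat.card H = Nat.card G := by
  rw [← φ.ker.card_mul_index, AddSubgroup.index_ker, AddMonoidHom.range_eq_top.mpr hφ,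
    AddSubgroup.card_top]

lemma AddMonoidHom.card_pairs_map_ne_mul_card [Finite G] (φ : G →+ H) (hφ : Surjective φ) :
    Nat.card {p : G × G // φ p.1 ≠ φ p.2} * Nat.card H = Nat.card G ^ 2 * (Nat.card H - 1) := by
  classical
  have hsplit : Nat.card G * Nat.card φ.ker + Nat.card {p : G × G // φ p.1 ≠ φ p.2}
      = Nat.card G ^ 2 := by
    rw [← φ.card_pairs_map_eq, ← Nat.card_sum, Nat.card_congr (Equiv.sumCompl _),
      Nat.card_prod, sq]
  have hker := φ.card_ker_mul_card_of_surjective hφ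
  have : Nat.card {p : G × G // φ p.1 ≠ φ p.2} * Nat.card H + Nat.card G ^ 2
      = Nat.card G ^ 2 * Nat.card H :=
    calc _ = Nat.card {p : G × G // φ p.1 ≠ φ p.2} * Nat.card H
            + Nat.card G * (Nat.card φ.ker * Nat.card H) := by rw [hker, sq]
      _ = (Nat.card G * Nat.card φ.ker + Nat.card {p : G × G // φ p.1 ≠ φ p.2}) * Nat.card H := by
            ring
      _ = _ := by rw [hsplit]
  rw [Nat.mul_sub_one]
  omega

end PairCount

lemma ZMod.two_mul_sub_ne_of_ne {a c : ZMod 3} (h : a ≠ c) : 2 * c - a ≠ a ∧ 2 * c - a ≠ c := by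
  revert a c; decide

lemma card_rainbow_ap_eq_card_pairs_ne {R C : Type*} [CommRing R] (π : R →+* ZMod 3)
    {f : R → C} (hf : ∀ x y, f x = f y ↔ π x = π y) :
    Nat.card {t : R × R × R // t.1 + t.2.1 = 2 * t.2.2 ∧
        f t.1 ≠ f t.2.1 ∧ f t.1 ≠ f t.2.2 ∧ f t.2.1 ≠ f t.2.2} =
      Nat.card {p : R × R // π p.1 ≠ π p.2} := by
  have hne : ∀ x y, f x ≠ f y ↔ π x ≠ π y := fun x y => (hf x y).not
  refine Nat.card_congr
    { toFun := fun t => ⟨(t.1.1, t.1.2.2), (hne _ _).mp t.2.2.2.1⟩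
      invFun := fun p => ⟨(p.1.1, 2 * p.1.2 - p.1.1, p.1.2), ?_⟩
      left_inv := fun ⟨⟨x, y, z⟩, hap, _⟩ => ?_
      right_inv := fun p => rfl }
  · obtain ⟨hx, hz⟩ := ZMod.two_mul_sub_ne_of_ne p.2
    simp only [hne, map_sub, map_mul, map_ofNat]
    exact ⟨by ring, hx.symm, p.2, hz⟩
  · have hy : y = 2 * z - x := by linear_combination hap
    simp [hy]

lemma ZMod.val_castHom_three {n : ℕ} [NeZero n] (h3 : 3 ∣ n) (x : ZMod n) :
    (ZMod.castHom h3 (ZMod 3) x).val = x.val % 3 := by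
  rw [ZMod.castHom_apply, ← ZMod.natCast_val, ZMod.val_natCast]

lemma ZMod.eq_iff_castHom_three_eq_of_colouring {n : ℕ} [NeZero n] (h3 : 3 ∣ n)
    {f : ZMod n → Fin 3}
    (hf : ∀ x : ZMod n, f x = if x.val % 3 = 0 then 0 else if x.val % 3 = 1 then 1 else 2)
    (x y : ZMod n) : f x = f y ↔ ZMod.castHom h3 (ZMod 3) x = ZMod.castHom h3 (ZMod 3) y := by
  have hf_val : ∀ x, (f x).val = x.val % 3 := by
    intro x
    rw [hf]
    split_ifs <;> simp <;> omega
  rw [← Fin.val_inj, ← (ZMod.val_injective _).eq_iff, hf_val, hf_val, ZMod.val_castHom_three,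
    ZMod.val_castHom_three]

theorem stmt10 (n : ℕ) (hn : 0 < n) (h3 : 3 ∣ n) (f : ZMod n → Fin 3)
    (hf : ∀ x : ZMod n, f x = if x.val % 3 = 0 then 0 else if x.val % 3 = 1 then 1 else 2) :
    (Nat.card {t : ZMod n × ZMod n × ZMod n //
        t.1 + t.2.1 = 2 * t.2.2 ∧ f t.1 ≠ f t.2.1 ∧ f t.1 ≠ f t.2.2 ∧
          f t.2.1 ≠ f t.2.2} : ℝ) = 2 / 3 * n ^ 2 := by
  have : NeZero n := ⟨hn.ne'⟩
  set π := ZMod.castHom h3 (ZMod 3)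
  rw [card_rainbow_ap_eq_card_pairs_ne π (ZMod.eq_iff_castHom_three_eq_of_colouring h3 hf)]
  have hcount := π.toAddMonoidHom.card_pairs_map_ne_mul_card (ZMod.castHom_surjective h3)
  rw [Nat.card_zmod, Nat.card_zmod] at hcount
  have hcount_real : (Nat.card {p : ZMod n × ZMod n // π p.1 ≠ π p.2} : ℝ) * 3 = n ^ 2 * 2 := by
    exact_mod_cast hcount
  linarith
end

section
/- For every ε > 0 and all sufficiently large n not divisible by 3, there is a 3-coloring of ℤ/nℤ such that at least (1/3 − ε)·n² of the n² triples (x, y, z) ∈ (ℤ/nℤ)³ with x + y = 2z are rainbow. -/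
/-!
Colour `x ∈ ℤ/nℤ` by the residue mod 3 of its representative in `[0, n)`. If `x, y < n` have the
same parity, then `(x, y, (x + y) / 2)` is an arithmetic progression of integers, hence one in
`ℤ/nℤ`; as `(x + y) / 2 ≡ -(x + y) (mod 3)`, it is rainbow as soon as `x ≢ y (mod 3)`. Those
pairs are the ones with `y - x ≡ 2, 4 (mod 6)`, and there are about `n² / 3` of them.
-/

open Finset

variable {n : ℕ}

def IsRainbowAP (f : ZMod n → Fin 3) (t : ZMod n × ZMod n × ZMod n) : Prop :=
  t.1 + t.2.1 = 2 * t.2.2 ∧ f t.1 ≠ f t.2.1 ∧ f t.1 ≠ f t.2.2 ∧ f t.2.1 ≠ f t.2.2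

def residueColoring (n : ℕ) (x : ZMod n) : Fin 3 :=
  ⟨x.val % 3, Nat.mod_lt _ three_pos⟩

lemma val_residueColoring_natCast {a : ℕ} (ha : a < n) :
    (residueColoring n a : ℕ) = a % 3 := by
  simp [residueColoring, ZMod.val_natCast_of_lt ha]

lemma residueColoring_surjective (hn : 3 ≤ n) : Function.Surjective (residueColoring n) :=
  fun c ↦ ⟨(c : ℕ), Fin.ext <| by
    rw [val_residueColoring_natCast (c.isLt.trans_le hn), Nat.mod_eq_of_lt c.isLt]⟩

lemma isRainbowAP_residueColoring {x y : ℕ} (hx : x < n) (hy : y < n)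
    (h2 : x % 2 = y % 2) (h3 : x % 3 ≠ y % 3) :
    IsRainbowAP (residueColoring n) (x, y, ((x + y) / 2 : ℕ)) := by
  have hz : (x + y) / 2 < n := by omega
  refine ⟨?_, ?_, ?_, ?_⟩
  · rw [← Nat.cast_add, ← Nat.cast_ofNat, ← Nat.cast_mul, Nat.mul_div_cancel' (by omega)]
  all_goals
    simp only [Ne, Fin.ext_iff, val_residueColoring_natCast hx, val_residueColoring_natCast hy,
      val_residueColoring_natCast hz]
    omega

def rainbowPairs (n : ℕ) : Finset (ℕ × ℕ) :=
  {p ∈ range n ×ˢ range n | p.1 % 2 = p.2 % 2 ∧ p.1 % 3 ≠ p.2 % 3}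

lemma card_rainbowPairs_le_card_rainbowAP [NeZero n] :
    #(rainbowPairs n) ≤ Nat.card {t // IsRainbowAP (residueColoring n) t} := by
  classical
  rw [Nat.card_eq_fintype_card, Fintype.card_subtype]
  refine card_le_card_of_injOn (fun p ↦ ((p.1 : ZMod n), (p.2 : ZMod n), ((p.1 + p.2) / 2 : ℕ)))
    (fun p hp ↦ ?_) (fun p hp q hq hpq ↦ ?_)
  · simp only [rainbowPairs, coe_filter, mem_product, mem_range, Set.mem_ofPred_eq] at hp
    simpa using isRainbowAP_residueColoring hp.1.1 hp.1.2 hp.2.1 hp.2.2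
  · simp only [rainbowPairs, coe_filter, mem_product, mem_range, Set.mem_ofPred_eq,
      Prod.mk.injEq] at hp hq hpq
    have h1 := congrArg ZMod.val hpq.1
    have h2 := congrArg ZMod.val hpq.2.1
    rw [ZMod.val_natCast_of_lt hp.1.1, ZMod.val_natCast_of_lt hq.1.1] at h1
    rw [ZMod.val_natCast_of_lt hp.1.2, ZMod.val_natCast_of_lt hq.1.2] at h2
    exact Prod.ext h1 h2

lemma le_card_rainbowPairs (n : ℕ) : n * (n / 6 * 2) ≤ #(rainbowPairs n) := by
  have hcard : #(range n ×ˢ range (n / 6) ×ˢ range 2) = n * (n / 6 * 2) := by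
    simp only [card_product, card_range]
  -- `y = 6k + (x + 2 + 2t) % 6` runs through the `y < n` with `y - x ≡ 2 + 2t (mod 6)`
  rw [← hcard]
  refine card_le_card_of_injOn (fun q ↦ (q.1, 6 * q.2.1 + (q.1 + 2 + 2 * q.2.2) % 6))
    (fun q hq ↦ ?_) (fun ⟨x, k, t⟩ hq ⟨x', k', t'⟩ hr hqr ↦ ?_)
  · simp only [coe_product, coe_range, Set.mem_prod, Set.mem_Iio] at hq
    simp only [rainbowPairs, coe_filter, mem_product, mem_range, Set.mem_ofPred_eq]
    omega
  · simp only [coe_product, coe_range, Set.mem_prod, Set.mem_Iio] at hq hr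
    simp only [Prod.mk.injEq] at hqr ⊢
    omega

lemma one_third_sub_mul_sq_le {ε : ℝ} (hε : 0 < ε) (hn : 2 / ε ≤ n) :
    (1 / 3 - ε) * (n : ℝ) ^ 2 ≤ (n * (n / 6 * 2) : ℕ) := by
  have hεn : 2 ≤ ε * n := by rwa [div_le_iff₀' hε] at hn
  have hfloor : (n : ℝ) ≤ 6 * (n / 6 : ℕ) + 5 := by exact_mod_cast (by omega)
  push_cast
  nlinarith [Nat.cast_nonneg (α := ℝ) n]

theorem stmt14 (ε : ℝ) (hε : 0 < ε) : ∃ N : ℕ, ∀ n : ℕ, N ≤ n → ¬ (3 ∣ n) →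
    ∃ f : ZMod n → Fin 3, Function.Surjective f ∧
      (1 / 3 - ε) * (n : ℝ) ^ 2 ≤
        (Nat.card {t : ZMod n × ZMod n × ZMod n //
          t.1 + t.2.1 = 2 * t.2.2 ∧ f t.1 ≠ f t.2.1 ∧ f t.1 ≠ f t.2.2 ∧
            f t.2.1 ≠ f t.2.2} : ℝ) := by
  refine ⟨max 3 ⌈2 / ε⌉₊, fun n hn _ ↦ ?_⟩
  have h3 : 3 ≤ n := le_of_max_le_left hn
  have hε' : 2 / ε ≤ n := Nat.ceil_le.mp (le_of_max_le_right hn)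
  have : NeZero n := ⟨by omega⟩
  refine ⟨residueColoring n, residueColoring_surjective h3, ?_⟩
  calc (1 / 3 - ε) * (n : ℝ) ^ 2 ≤ (n * (n / 6 * 2) : ℕ) := one_third_sub_mul_sq_le hε hε'
    _ ≤ _ := by
      exact_mod_cast (le_card_rainbowPairs n).trans card_rainbowPairs_le_card_rainbowAP
end

section
/- Suppose 5 divides n. Define f : ℤ/nℤ → {1,2,3} by mapping x to 1 if its representative in {0,...,n−1} is ≡ 0 (mod 5), to 2 if ≡ ±1 (mod 5), and to 3 if ≡ ±2 (mod 5). Then the number of monochromatic triples (x, y, z) ∈ (ℤ/nℤ)³ with x + y = z equals n²/25. -/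
/-!
The colouring factors through the reduction `π : ℤ/nℤ → ℤ/5ℤ`, and on `ℤ/5ℤ` the classes
`{0}`, `{±1}`, `{±2}` contain no Schur triple except `0 + 0 = 0`: each of `{±1}`, `{±2}` is
sum-free, because `1 + 1`, `1 - 1`, `2 + 2`, `2 - 2` all avoid the class. Hence a triple
`(x, y, x + y)` is monochromatic exactly when `x, y ∈ ker π`, and `|ker π| = n / 5`.
-/

open ZMod

def sumTriplesEquiv {G : Type*} [Add G] (P : G → G → G → Prop) :
    {t : G × G × G // t.1 + t.2.1 = t.2.2 ∧ P t.1 t.2.1 t.2.2} ≃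
      {p : G × G // P p.1 p.2 (p.1 + p.2)} where
  toFun t := ⟨(t.1.1, t.1.2.1), t.2.1 ▸ t.2.2⟩
  invFun p := ⟨(p.1.1, p.1.2, p.1.1 + p.1.2), rfl, p.2⟩
  left_inv := fun ⟨_, hsum, _⟩ => Subtype.ext <| Prod.ext rfl <| Prod.ext rfl hsum
  right_inv _ := rfl

namespace ZMod

theorem val_mod_eq_val_castHom {n d : ℕ} [NeZero n] (h : d ∣ n) (x : ZMod n) :
    x.val % d = (castHom h (ZMod d) x).val := by
  rw [castHom_apply, cast_eq_val, val_natCast]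

theorem card_ker_castHom {n d : ℕ} [NeZero n] (h : d ∣ n) :
    Nat.card (castHom h (ZMod d)).toAddMonoidHom.ker = n / d := by
  have hd : d ≠ 0 := by rintro rfl; exact NeZero.ne n (Nat.eq_zero_of_zero_dvd h)
  have hcard := AddSubgroup.card_mul_index (castHom h (ZMod d)).toAddMonoidHom.ker
  rw [AddSubgroup.index_ker, AddMonoidHom.range_eq_top_of_surjective _ (castHom_surjective h),
    AddSubgroup.card_top, Nat.card_zmod, Nat.card_zmod] at hcard
  exact Nat.eq_div_of_mul_eq_left hd hcard

end ZMod

def colourMod5 (r : ZMod 5) : Fin 3 :=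
  if r.val = 0 then 0 else if r.val = 1 ∨ r.val = 4 then 1 else 2

theorem colourMod5_monochromatic_iff (a b : ZMod 5) :
    colourMod5 a = colourMod5 b ∧ colourMod5 b = colourMod5 (a + b) ↔ a = 0 ∧ b = 0 := by
  revert a b; decide

theorem stmt15 (n : ℕ) (hn : 0 < n) (h5 : 5 ∣ n) (f : ZMod n → Fin 3)
    (hf : ∀ x : ZMod n, f x = if x.val % 5 = 0 then 0
      else if x.val % 5 = 1 ∨ x.val % 5 = 4 then 1 else 2) :
    Nat.card {t : ZMod n × ZMod n × ZMod n //
        t.1 + t.2.1 = t.2.2 ∧ f t.1 = f t.2.1 ∧ f t.2.1 = f t.2.2} = n ^ 2 / 25 := by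
  have : NeZero n := ⟨hn.ne'⟩
  set π := castHom h5 (ZMod 5)
  have hfπ : f = colourMod5 ∘ π := funext fun x => by
    rw [hf, val_mod_eq_val_castHom h5]; rfl
  set K := π.toAddMonoidHom.ker
  have hmono (x y : ZMod n) : f x = f y ∧ f y = f (x + y) ↔ x ∈ K ∧ y ∈ K := by
    simp only [hfπ, Function.comp_apply, map_add, colourMod5_monochromatic_iff, K,
      AddMonoidHom.mem_ker, RingHom.toAddMonoidHom_eq_coe, AddMonoidHom.coe_coe]
  calc _ = Nat.card {p : ZMod n × ZMod n // p.1 ∈ K ∧ p.2 ∈ K} :=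
        Nat.card_congr <| (sumTriplesEquiv fun x y z => f x = f y ∧ f y = f z).trans <|
          Equiv.subtypeEquivRight fun p => hmono p.1 p.2
    _ = Nat.card (K × K) := Nat.card_congr Equiv.subtypeProdEquivProd
    _ = Nat.card K ^ 2 := by rw [Nat.card_prod, sq]
    _ = n ^ 2 / 25 := by rw [card_ker_castHom, Nat.div_pow h5]
end

section
/- For every ε > 0 and all sufficiently large n, there exists a 3-coloring f of ℤ/nℤ such that the number of monochromatic triples (x, y, z) ∈ (ℤ/nℤ)³ with x + y = z is at most (1/10 + ε)·n². -/
/-!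
Colour `ZMod n` by the three arcs `[0, 3n/10)`, `[3n/10, 7n/10)`, `[7n/10, n)` of representatives.
A monochromatic solution of `x + y = z` is determined by `(x, y)`, and for each arc the admissible
pairs split into those with `x + y < n` and those that wrap around. After a translation, resp. a
reflection, each part lies in a triangle `{u + v < K}`; the six values of `K` are about
`3n/10, 0, n/10, n/10, 0, 3n/10`, so the triangles have total area
`(9 + 1 + 1 + 9) n² / 200 = n² / 10`.
-/

open Finset

def triangle (K : ℕ) : Finset (ℕ × ℕ) := {p ∈ range K ×ˢ range K | p.1 + p.2 < K}

lemma triangle_eq_biUnion_antidiagonal (K : ℕ) :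
    triangle K = (range K).biUnion antidiagonal := by
  ext ⟨x, y⟩
  simp only [triangle, mem_filter, mem_product, mem_range, mem_biUnion,
    HasAntidiagonal.mem_antidiagonal]
  constructor
  · rintro ⟨-, h⟩
    exact ⟨x + y, h, rfl⟩
  · rintro ⟨s, hs, rfl⟩
    omega

lemma two_mul_card_triangle (K : ℕ) : 2 * #(triangle K) = K * (K + 1) := by
  have hdisj : (range K : Set ℕ).PairwiseDisjoint antidiagonal := fun s _ t _ hst =>
    disjoint_left.2 fun p hs ht => hst <|
      (HasAntidiagonal.mem_antidiagonal.1 hs).symm.trans (HasAntidiagonal.mem_antidiagonal.1 ht)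
  rw [triangle_eq_biUnion_antidiagonal, card_biUnion hdisj]
  simp only [Nat.card_antidiagonal]
  have := sum_range_id_mul_two (K + 1)
  rw [sum_range_succ'] at this
  simp only [add_tsub_cancel_right, add_zero] at this
  linarith

lemma card_triangle_le {K : ℕ} {x : ℝ} (hK : (K : ℝ) ≤ x) :
    (#(triangle K) : ℝ) ≤ x * (x + 1) / 2 := by
  have h : 2 * (#(triangle K) : ℝ) = K * (K + 1) := by exact_mod_cast two_mul_card_triangle K
  nlinarith [(K.cast_nonneg : (0 : ℝ) ≤ K)]

def schurPairs (n : ℕ) (s : Finset ℕ) : Finset (ℕ × ℕ) :=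
  {p ∈ s ×ˢ s | (p.1 + p.2) % n ∈ s}

lemma card_schurPairs_Ico_le (n a b : ℕ) (hbn : b ≤ n) :
    #(schurPairs n (Ico a b)) ≤ #(triangle (b - 2 * a)) + #(triangle (2 * b - 1 - n - a)) := by
  -- pairs with `x + y < n` are translated by `-a`, pairs that wrap around are reflected in `b - 1`
  rw [← card_filter_add_card_filter_not (fun p : ℕ × ℕ => p.1 + p.2 < n)]
  refine add_le_add ?_ ?_
  · refine card_le_card_of_injOn (fun p : ℕ × ℕ => (p.1 - a, p.2 - a))
      (fun p hp => ?_) ?_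
    · simp only [schurPairs, coe_filter, mem_filter, mem_product, mem_Ico, Set.mem_ofPred_eq] at hp
      rw [Nat.mod_eq_of_lt hp.2] at hp
      simp only [triangle, coe_filter, mem_product, mem_range, Set.mem_ofPred_eq]
      omega
    · rintro p hp q hq hpq
      simp only [schurPairs, coe_filter, mem_filter, mem_product, mem_Ico, Set.mem_ofPred_eq]
        at hp hq
      simp only [Prod.mk.injEq] at hpq
      exact Prod.ext (by omega) (by omega)
  · refine card_le_card_of_injOn (fun p : ℕ × ℕ => (b - 1 - p.1, b - 1 - p.2))
      (fun p hp => ?_) ?_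
    · simp only [schurPairs, coe_filter, mem_filter, mem_product, mem_Ico, Set.mem_ofPred_eq] at hp
      rw [Nat.mod_eq_sub_mod (by omega), Nat.mod_eq_of_lt (by omega)] at hp
      simp only [triangle, coe_filter, mem_product, mem_range, Set.mem_ofPred_eq]
      omega
    · rintro p hp q hq hpq
      simp only [schurPairs, coe_filter, mem_filter, mem_product, mem_Ico, Set.mem_ofPred_eq]
        at hp hq
      simp only [Prod.mk.injEq] at hpq
      exact Prod.ext (by omega) (by omega)

lemma natCard_monochromatic_le_card_filter (n : ℕ) [NeZero n] {α : Type*} [DecidableEq α]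
    (g : ℕ → α) :
    Nat.card {t : ZMod n × ZMod n × ZMod n //
        t.1 + t.2.1 = t.2.2 ∧ g t.1.val = g t.2.1.val ∧ g t.2.1.val = g t.2.2.val} ≤
      #{p ∈ range n ×ˢ range n | g p.1 = g p.2 ∧ g p.2 = g ((p.1 + p.2) % n)} := by
  rw [← Nat.card_eq_finsetCard]
  refine Nat.card_le_card_of_injective (fun t => ⟨(t.1.1.val, t.1.2.1.val), ?_⟩) ?_
  · obtain ⟨hz, hxy, hyz⟩ := t.2
    rw [mem_filter, mem_product, mem_range, mem_range, ← ZMod.val_add, hz]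
    exact ⟨⟨ZMod.val_lt _, ZMod.val_lt _⟩, hxy, hyz⟩
  · intro ⟨⟨x, y, z⟩, hz, _⟩ ⟨⟨x', y', z'⟩, hz', _⟩ h
    simp only [Subtype.mk.injEq, Prod.mk.injEq] at h
    obtain rfl := ZMod.val_injective n h.1
    obtain rfl := ZMod.val_injective n h.2
    obtain rfl : z = z' := hz.symm.trans hz'
    rfl

def cutColoring (a b m : ℕ) : Fin 3 := if m < a then 0 else if m < b then 1 else 2

lemma filter_cutColoring_subset (n : ℕ) [NeZero n] (a b : ℕ) :
    {p ∈ range n ×ˢ range n | cutColoring a b p.1 = cutColoring a b p.2 ∧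
        cutColoring a b p.2 = cutColoring a b ((p.1 + p.2) % n)} ⊆
      schurPairs n (Ico 0 a) ∪ schurPairs n (Ico a b) ∪ schurPairs n (Ico b n) := by
  intro p hp
  have hlt := Nat.mod_lt (p.1 + p.2) (NeZero.pos n)
  rw [mem_filter, mem_product, mem_range, mem_range] at hp
  unfold cutColoring at hp
  simp only [schurPairs, mem_union, mem_filter, mem_product, mem_Ico]
  split_ifs at hp <;> omega

lemma cutColoring_comp_val_surjective (n a b : ℕ) (ha : 0 < a) (hab : a < b) (hbn : b < n) :
    Function.Surjective fun x : ZMod n => cutColoring a b x.val := by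
  have : NeZero n := ⟨by omega⟩
  have hval : ∀ m < n, (m : ZMod n).val = m := fun m hm => ZMod.val_cast_of_lt hm
  intro c
  fin_cases c
  · exact ⟨(0 : ℕ), by simp [cutColoring, ha]⟩
  · exact ⟨(a : ℕ), by simp [cutColoring, hval a (by omega), hab]⟩
  · exact ⟨(b : ℕ), by simp [cutColoring, hval b hbn, hab.le]⟩

lemma natCard_monochromatic_cutColoring_le (n : ℕ) [NeZero n] (a b : ℕ) :
    Nat.card {t : ZMod n × ZMod n × ZMod n // t.1 + t.2.1 = t.2.2 ∧
        cutColoring a b t.1.val = cutColoring a b t.2.1.val ∧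
        cutColoring a b t.2.1.val = cutColoring a b t.2.2.val} ≤
      #(schurPairs n (Ico 0 a)) + #(schurPairs n (Ico a b)) + #(schurPairs n (Ico b n)) := by
  refine (natCard_monochromatic_le_card_filter n _).trans
    ((card_le_card (filter_cutColoring_subset n a b)).trans ?_)
  exact (card_union_le _ _).trans (by gcongr; exact card_union_le _ _)

lemma sum_card_schurPairs_tenths_le (n : ℕ) :
    (#(schurPairs n (Ico 0 (3 * n / 10))) + #(schurPairs n (Ico (3 * n / 10) (7 * n / 10))) +
        #(schurPairs n (Ico (7 * n / 10) n)) : ℝ) ≤ n ^ 2 / 10 + 2 * n + 18 := by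
  have htri : ∀ K c : ℕ, 10 * K ≤ c * n + 20 →
      (#(triangle K) : ℝ) ≤ (c * n / 10 + 2) * (c * n / 10 + 2 + 1) / 2 := by
    intro K c hK
    refine card_triangle_le ?_
    have : (10 * K : ℝ) ≤ c * n + 20 := by exact_mod_cast hK
    linarith
  have h₁ := Nat.cast_le (α := ℝ) |>.2 <| card_schurPairs_Ico_le n 0 (3 * n / 10) (by omega)
  have h₂ := Nat.cast_le (α := ℝ) |>.2 <|
    card_schurPairs_Ico_le n (3 * n / 10) (7 * n / 10) (by omega)
  have h₃ := Nat.cast_le (α := ℝ) |>.2 <| card_schurPairs_Ico_le n (7 * n / 10) n le_rfl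
  have := htri _ 3 (by omega : 10 * (3 * n / 10 - 2 * 0) ≤ 3 * n + 20)
  have := htri _ 0 (by omega : 10 * (2 * (3 * n / 10) - 1 - n - 0) ≤ 0 * n + 20)
  have := htri _ 1 (by omega : 10 * (7 * n / 10 - 2 * (3 * n / 10)) ≤ 1 * n + 20)
  have := htri _ 1 (by omega : 10 * (2 * (7 * n / 10) - 1 - n - 3 * n / 10) ≤ 1 * n + 20)
  have := htri _ 0 (by omega : 10 * (n - 2 * (7 * n / 10)) ≤ 0 * n + 20)
  have := htri _ 3 (by omega : 10 * (2 * n - 1 - n - 7 * n / 10) ≤ 3 * n + 20)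
  push_cast at *
  linarith

theorem stmt18 (ε : ℝ) (hε : 0 < ε) : ∃ N : ℕ, ∀ n : ℕ, N ≤ n →
    ∃ f : ZMod n → Fin 3, Function.Surjective f ∧
      (Nat.card {t : ZMod n × ZMod n × ZMod n //
        t.1 + t.2.1 = t.2.2 ∧ f t.1 = f t.2.1 ∧ f t.2.1 = f t.2.2} : ℝ) ≤
      (1 / 10 + ε) * (n : ℝ) ^ 2 := by
  refine ⟨max 10 ⌈20 / ε⌉₊, fun n hn => ?_⟩
  have hn₁₀ : 10 ≤ n := le_of_max_le_left hn
  have : NeZero n := ⟨by omega⟩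
  have hεn : 20 ≤ ε * n := by
    have := Nat.ceil_le.1 (le_of_max_le_right hn)
    rwa [div_le_iff₀ hε, mul_comm] at this
  refine ⟨fun x => cutColoring (3 * n / 10) (7 * n / 10) x.val,
    cutColoring_comp_val_surjective n _ _ (by omega) (by omega) (by omega), ?_⟩
  have hmono := Nat.cast_le (α := ℝ) |>.2 <|
    natCard_monochromatic_cutColoring_le n (3 * n / 10) (7 * n / 10)
  push_cast at hmono
  have hn₁₀' : (10 : ℝ) ≤ n := by exact_mod_cast hn₁₀
  nlinarith [sum_card_schurPairs_tenths_le n]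
end
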